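/- arXiv:0707.0146 — 7 statements merged into one kernel-verified Lean document; each statement's English description precedes it below -/
import Mathlib

section
/- Let I ⊆ ℝ be an open interval, let ζ, B, R : ℝ → ℝ be twice continuously differentiable on I with ζ(r) ≠ 0, R(r) ≠ 0 and (R·ζ)'(r) = R'(r)ζ(r) + R(r)ζ'(r) ≠ 0 for all r ∈ I, and suppose (ζ, B, R) satisfies the general diagonal isotropy ODE on I. Fix r₀ ∈ I, λ ∈ ℝ, and define Δ : I → ℝ by Δ(r) = λ · (R(r)ζ(r)/(R'(r)ζ(r)+R(r)ζ'(r)))² · exp( 2 ∫_{r₀}^{r} (ζ'(s)/ζ(s)) · (R'(s)ζ(s) − R(s)ζ'(s))/(R'(s)ζ(s) + R(s)ζ'(s)) ds ). Then (ζ, B + Δ, R) also satisfies the general diagonal isotropy ODE on I. -/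
/-!
The isotropy ODE is linear in `B`: it reads `P B' + Q B + 2ζ = 0` with `P = R (Rζ)'` and
`Q = 2 (R R'' ζ + R² ζ'' − R R' ζ' − R'² ζ)`, so it suffices that `Δ` solves the homogeneous
equation `P Δ' + Q Δ = 0`. Write `Δ = λ f² exp (2G)` with `f = Rζ/(Rζ)'` and `G' = g`, the
integrand. Then `Δ' = 2 λ f exp (2G) (f' + f g)`, and everything reduces to the pointwise
rational identity `2 P (f' + f g) + Q f = 0` in `R, R', R'', ζ, ζ', ζ''`.
-/

open Set

theorem isotropy_key_identity (R R' R'' z z' z'' : ℝ) (hz : z ≠ 0)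
    (hv : R' * z + R * z' ≠ 0) :
    2 * (R * (R' * z + R * z')) *
        (((R' * z + R * z') * (R' * z + R * z')
            - R * z * ((R'' * z + R' * z') + (R' * z' + R * z''))) / (R' * z + R * z') ^ 2
          + R * z / (R' * z + R * z') * (z' / z * ((R' * z - R * z') / (R' * z + R * z'))))
      + 2 * (R * R'' * z + R ^ 2 * z'' - R * R' * z' - R' ^ 2 * z) *
          (R * z / (R' * z + R * z')) = 0 := by
  field_simp
  ring

theorem HasDerivAt.const_mul_sq_mul_exp_two_mul {f G : ℝ → ℝ} {f' G' r : ℝ} (c : ℝ)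
    (hf : HasDerivAt f f' r) (hG : HasDerivAt G G' r) :
    HasDerivAt (fun x => c * f x ^ 2 * Real.exp (2 * G x))
      (2 * (c * f r * Real.exp (2 * G r)) * (f' + f r * G')) r := by
  refine (((hf.fun_pow 2).const_mul c).fun_mul (hG.const_mul 2).exp).congr_deriv ?_
  norm_num
  ring

theorem ContinuousOn.hasDerivAt_integral_Ioo {a b r₀ r : ℝ} {g : ℝ → ℝ}
    (hg : ContinuousOn g (Ioo a b)) (hr₀ : r₀ ∈ Ioo a b) (hr : r ∈ Ioo a b) :
    HasDerivAt (fun x => ∫ s in r₀..x, g s) (g r) r :=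
  intervalIntegral.integral_hasDerivAt_right
    ((hg.mono (ordConnected_Ioo.uIcc_subset hr₀ hr)).intervalIntegrable)
    (hg.stronglyMeasurableAtFilter isOpen_Ioo r hr) (hg.continuousAt (isOpen_Ioo.mem_nhds hr))

theorem ContDiffOn.hasDerivAt_deriv_of_isOpen {f : ℝ → ℝ} {s : Set ℝ} {r : ℝ}
    (hf : ContDiffOn ℝ 2 f s) (hs : IsOpen s) (hr : r ∈ s) :
    HasDerivAt f (deriv f r) r ∧ HasDerivAt (deriv f) (deriv (deriv f) r) r := by
  have hf' : ContDiffOn ℝ 1 (deriv f) s := hf.deriv_of_isOpen hs (by norm_num)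
  exact ⟨((hf.differentiableOn two_ne_zero).differentiableAt (hs.mem_nhds hr)).hasDerivAt,
    ((hf'.differentiableOn one_ne_zero).differentiableAt (hs.mem_nhds hr)).hasDerivAt⟩

theorem hasDerivAt_mul_div_deriv_mul {R ζ : ℝ → ℝ} {R'' ζ'' r : ℝ}
    (hR : HasDerivAt R (deriv R r) r) (hR' : HasDerivAt (deriv R) R'' r)
    (hζ : HasDerivAt ζ (deriv ζ r) r) (hζ' : HasDerivAt (deriv ζ) ζ'' r)
    (hv : deriv R r * ζ r + R r * deriv ζ r ≠ 0) :
    HasDerivAt (fun x => R x * ζ x / (deriv R x * ζ x + R x * deriv ζ x))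
      (((deriv R r * ζ r + R r * deriv ζ r) * (deriv R r * ζ r + R r * deriv ζ r)
          - R r * ζ r * ((R'' * ζ r + deriv R r * deriv ζ r)
            + (deriv R r * deriv ζ r + R r * ζ''))) /
        (deriv R r * ζ r + R r * deriv ζ r) ^ 2) r :=
  (hR.mul hζ).div ((hR'.mul hζ).add (hR.mul hζ')) hv

theorem general_diagonal_one_general
    (a b : ℝ) (ζ B R : ℝ → ℝ)
    (hζ : ContDiffOn ℝ 2 ζ (Set.Ioo a b))
    (hB : ContDiffOn ℝ 2 B (Set.Ioo a b))
    (hR : ContDiffOn ℝ 2 R (Set.Ioo a b))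
    (hζ0 : ∀ r ∈ Set.Ioo a b, ζ r ≠ 0)
    (hRζ0 : ∀ r ∈ Set.Ioo a b, deriv R r * ζ r + R r * deriv ζ r ≠ 0)
    (hODE : ∀ r ∈ Set.Ioo a b,
      R r * (deriv R r * ζ r + R r * deriv ζ r) * deriv B r
        + 2 * (R r * deriv (deriv R) r * ζ r + (R r) ^ 2 * deriv (deriv ζ) r
            - R r * deriv R r * deriv ζ r - (deriv R r) ^ 2 * ζ r) * B r
        + 2 * ζ r = 0)
    (r₀ : ℝ) (hr₀ : r₀ ∈ Set.Ioo a b) (lam : ℝ) (Δ : ℝ → ℝ)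
    (hΔ : ∀ r ∈ Set.Ioo a b,
      Δ r = lam * (R r * ζ r / (deriv R r * ζ r + R r * deriv ζ r)) ^ 2 *
        Real.exp (2 * ∫ s in r₀..r,
          (deriv ζ s / ζ s) *
            ((deriv R s * ζ s - R s * deriv ζ s) / (deriv R s * ζ s + R s * deriv ζ s)))) :
    ∀ r ∈ Set.Ioo a b,
      R r * (deriv R r * ζ r + R r * deriv ζ r) * deriv (fun x => B x + Δ x) r
        + 2 * (R r * deriv (deriv R) r * ζ r + (R r) ^ 2 * deriv (deriv ζ) r
            - R r * deriv R r * deriv ζ r - (deriv R r) ^ 2 * ζ r) * (B r + Δ r)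
        + 2 * ζ r = 0 := by
  intro r hr
  have hζ' := hζ.continuousOn_deriv_of_isOpen isOpen_Ioo one_le_two
  have hR' := hR.continuousOn_deriv_of_isOpen isOpen_Ioo one_le_two
  have hg : ContinuousOn (fun s => (deriv ζ s / ζ s) *
      ((deriv R s * ζ s - R s * deriv ζ s) / (deriv R s * ζ s + R s * deriv ζ s))) (Ioo a b) :=
    (hζ'.div hζ.continuousOn hζ0).mul <|
      ((hR'.mul hζ.continuousOn).sub (hR.continuousOn.mul hζ')).div
        ((hR'.mul hζ.continuousOn).add (hR.continuousOn.mul hζ')) hRζ0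
  obtain ⟨hRd, hRdd⟩ := hR.hasDerivAt_deriv_of_isOpen isOpen_Ioo hr
  obtain ⟨hζd, hζdd⟩ := hζ.hasDerivAt_deriv_of_isOpen isOpen_Ioo hr
  have hf := hasDerivAt_mul_div_deriv_mul hRd hRdd hζd hζdd (hRζ0 r hr)
  have hΔd := (hf.const_mul_sq_mul_exp_two_mul lam (hg.hasDerivAt_integral_Ioo hr₀ hr)
    ).congr_of_eventuallyEq (Filter.eventuallyEq_of_mem (isOpen_Ioo.mem_nhds hr) hΔ)
  rw [((hB.hasDerivAt_deriv_of_isOpen isOpen_Ioo hr).1.fun_add hΔd).deriv, hΔ r hr]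
  linear_combination hODE r hr + (lam * (R r * ζ r / (deriv R r * ζ r + R r * deriv ζ r)) *
      Real.exp (2 * ∫ s in r₀..r, (deriv ζ s / ζ s) *
        ((deriv R s * ζ s - R s * deriv ζ s) / (deriv R s * ζ s + R s * deriv ζ s)))) *
    isotropy_key_identity (R r) (deriv R r) (deriv (deriv R) r) (ζ r) (deriv ζ r)
      (deriv (deriv ζ) r) (hζ0 r hr) (hRζ0 r hr)

/-- **General diagonal 1.**  If `(ζ, B, R)` satisfies the general diagonal pressure-isotropy
ODE on an open interval, then so does `(ζ, B + Δ, R)`, where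
`Δ(r) = λ (Rζ/(Rζ)')² exp(2 ∫ (ζ'/ζ)·(R'ζ − Rζ')/(R'ζ + Rζ'))`. -/
theorem general_diagonal_one
    (a b : ℝ) (ζ B R : ℝ → ℝ)
    (hζ : ContDiffOn ℝ 2 ζ (Set.Ioo a b))
    (hB : ContDiffOn ℝ 2 B (Set.Ioo a b))
    (hR : ContDiffOn ℝ 2 R (Set.Ioo a b))
    (hζ0 : ∀ r ∈ Set.Ioo a b, ζ r ≠ 0)
    (hR0 : ∀ r ∈ Set.Ioo a b, R r ≠ 0)
    (hRζ0 : ∀ r ∈ Set.Ioo a b, deriv R r * ζ r + R r * deriv ζ r ≠ 0)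
    (hODE : ∀ r ∈ Set.Ioo a b,
      R r * (deriv R r * ζ r + R r * deriv ζ r) * deriv B r
        + 2 * (R r * deriv (deriv R) r * ζ r + (R r) ^ 2 * deriv (deriv ζ) r
            - R r * deriv R r * deriv ζ r - (deriv R r) ^ 2 * ζ r) * B r
        + 2 * ζ r = 0)
    (r₀ : ℝ) (hr₀ : r₀ ∈ Set.Ioo a b) (lam : ℝ) (Δ : ℝ → ℝ)
    (hΔ : ∀ r ∈ Set.Ioo a b,
      Δ r = lam * (R r * ζ r / (deriv R r * ζ r + R r * deriv ζ r)) ^ 2 *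
        Real.exp (2 * ∫ s in r₀..r,
          (deriv ζ s / ζ s) *
            ((deriv R s * ζ s - R s * deriv ζ s) / (deriv R s * ζ s + R s * deriv ζ s)))) :
    ∀ r ∈ Set.Ioo a b,
      R r * (deriv R r * ζ r + R r * deriv ζ r) * deriv (fun x => B x + Δ x) r
        + 2 * (R r * deriv (deriv R) r * ζ r + (R r) ^ 2 * deriv (deriv ζ) r
            - R r * deriv R r * deriv ζ r - (deriv R r) ^ 2 * ζ r) * (B r + Δ r)
        + 2 * ζ r = 0 :=
  general_diagonal_one_general a b ζ B R hζ hB hR hζ0 hRζ0 hODE r₀ hr₀ lam Δ hΔ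
end

section
/- Let I ⊆ ℝ be an open interval, let ζ, R : ℝ → ℝ be twice continuously differentiable on I with ζ(r) ≠ 0, R(r) ≠ 0 and R'(r)ζ(r) + R(r)ζ'(r) ≠ 0 for all r ∈ I. Fix r₀ ∈ I and λ ∈ ℝ, and define Δ : I → ℝ by Δ(r) = λ · (R(r)ζ(r)/(R'(r)ζ(r)+R(r)ζ'(r)))² · exp( 2 ∫_{r₀}^{r} (ζ'(s)/ζ(s)) · (R'(s)ζ(s) − R(s)ζ'(s))/(R'(s)ζ(s) + R(s)ζ'(s)) ds ). Then for all r ∈ I: R(r)·(R'(r)ζ(r)+R(r)ζ'(r))·Δ'(r) + 2·(R(r)R''(r)ζ(r) + R(r)²ζ''(r) − R(r)R'(r)ζ'(r) − R'(r)²ζ(r))·Δ(r) = 0. -/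
/-!
Write `W = R'ζ + Rζ'`, `g = Rζ/W` and `h = (ζ'/ζ)(R'ζ - Rζ')/W`, so that `Δ = λ g² e^{2∫h}`.
Then `Δ' = 2λ g (g' + g h) e^{2∫h}`, and the ODE reduces to `R W (g' + g h) + Q g = 0`, where
`Q = RR''ζ + R²ζ'' - RR'ζ' - R'²ζ`; after clearing the denominators `W` and `ζ` this is a
polynomial identity in `R, R', R'', ζ, ζ', ζ''`.
-/

open Set Filter Topology

theorem ContDiffOn.hasDerivAt_deriv_deriv_of_isOpen {𝕜 F : Type*} [NontriviallyNormedField 𝕜]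
    [NormedAddCommGroup F] [NormedSpace 𝕜 F] {f : 𝕜 → F} {s : Set 𝕜}
    (hf : ContDiffOn 𝕜 2 f s) (hs : IsOpen s) {x : 𝕜} (hx : x ∈ s) :
    HasDerivAt (deriv f) (deriv (deriv f) x) x :=
  ((hf.deriv_of_isOpen (m := 1) hs (by norm_num)).differentiableOn one_ne_zero).hasDerivAt
    (hs.mem_nhds hx)

theorem ContinuousOn.hasDerivAt_intervalIntegral_of_isOpen {E : Type*} [NormedAddCommGroup E]
    [NormedSpace ℝ E] [CompleteSpace E] {f : ℝ → E} {s : Set ℝ} [s.OrdConnected]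
    (hf : ContinuousOn f s) (hs : IsOpen s) {a x : ℝ} (ha : a ∈ s) (hx : x ∈ s) :
    HasDerivAt (fun y => ∫ t in a..y, f t) (f x) x :=
  intervalIntegral.integral_hasDerivAt_right
    ((hf.mono (Set.OrdConnected.uIcc_subset ‹_› ha hx)).intervalIntegrable)
    (hf.stronglyMeasurableAtFilter hs x hx) (hf.continuousAt (hs.mem_nhds hx))

theorem HasDerivAt.const_mul_sq_mul_exp {g E : ℝ → ℝ} {g' E' x : ℝ} (c : ℝ)
    (hg : HasDerivAt g g' x) (hE : HasDerivAt E E' x) :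
    HasDerivAt (fun y => c * g y ^ 2 * Real.exp (2 * E y))
      (2 * c * g x * (g' + g x * E') * Real.exp (2 * E x)) x :=
  (((hg.fun_pow 2).const_mul c).fun_mul (hE.const_mul 2).exp).congr_deriv (by push_cast; ring)

theorem isotropy_identity {R R' R'' ζ ζ' ζ'' : ℝ} (hζ : ζ ≠ 0) (hW : R' * ζ + R * ζ' ≠ 0) :
    R * (R' * ζ + R * ζ') *
        (((R' * ζ + R * ζ') * (R' * ζ + R * ζ')
            - R * ζ * (R'' * ζ + R' * ζ' + (R' * ζ' + R * ζ''))) / (R' * ζ + R * ζ') ^ 2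
          + R * ζ / (R' * ζ + R * ζ') * (ζ' / ζ * ((R' * ζ - R * ζ') / (R' * ζ + R * ζ'))))
      + (R * R'' * ζ + R ^ 2 * ζ'' - R * R' * ζ' - R' ^ 2 * ζ) * (R * ζ / (R' * ζ + R * ζ'))
      = 0 := by
  field_simp
  ring

theorem general_diagonal_one_lemma_general
    (a b : ℝ) (ζ R : ℝ → ℝ)
    (hζ : ContDiffOn ℝ 2 ζ (Set.Ioo a b))
    (hR : ContDiffOn ℝ 2 R (Set.Ioo a b))
    (hζ0 : ∀ r ∈ Set.Ioo a b, ζ r ≠ 0)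
    (hRζ0 : ∀ r ∈ Set.Ioo a b, deriv R r * ζ r + R r * deriv ζ r ≠ 0)
    (r₀ : ℝ) (hr₀ : r₀ ∈ Set.Ioo a b) (lam : ℝ) (Δ : ℝ → ℝ)
    (hΔ : ∀ r ∈ Set.Ioo a b,
      Δ r = lam * (R r * ζ r / (deriv R r * ζ r + R r * deriv ζ r)) ^ 2 *
        Real.exp (2 * ∫ s in r₀..r,
          (deriv ζ s / ζ s) *
            ((deriv R s * ζ s - R s * deriv ζ s) / (deriv R s * ζ s + R s * deriv ζ s)))) :
    ∀ r ∈ Set.Ioo a b,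
      R r * (deriv R r * ζ r + R r * deriv ζ r) * deriv Δ r
        + 2 * (R r * deriv (deriv R) r * ζ r + (R r) ^ 2 * deriv (deriv ζ) r
            - R r * deriv R r * deriv ζ r - (deriv R r) ^ 2 * ζ r) * Δ r = 0 := by
  intro r hr
  have hs : IsOpen (Ioo a b) := isOpen_Ioo
  have hζ' := hζ.continuousOn_deriv_of_isOpen hs (by norm_num)
  have hR' := hR.continuousOn_deriv_of_isOpen hs (by norm_num)
  have hζd := (hζ.differentiableOn two_ne_zero).hasDerivAt (hs.mem_nhds hr)
  have hRd := (hR.differentiableOn two_ne_zero).hasDerivAt (hs.mem_nhds hr)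
  have hζdd := hζ.hasDerivAt_deriv_deriv_of_isOpen hs hr
  have hRdd := hR.hasDerivAt_deriv_deriv_of_isOpen hs hr
  have hg := (hRd.fun_mul hζd).fun_div
    ((hRdd.fun_mul hζd).fun_add (hRd.fun_mul hζdd)) (hRζ0 r hr)
  have hcont : ContinuousOn (fun s => (deriv ζ s / ζ s) *
      ((deriv R s * ζ s - R s * deriv ζ s) / (deriv R s * ζ s + R s * deriv ζ s))) (Ioo a b) := by
    have := hζ.continuousOn
    have := hR.continuousOn
    fun_prop (disch := assumption)
  have hΔ' := ((hg.const_mul_sq_mul_exp lam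
    (hcont.hasDerivAt_intervalIntegral_of_isOpen hs hr₀ hr)).congr_of_eventuallyEq
      (eventually_of_mem (hs.mem_nhds hr) hΔ)).deriv
  rw [hΔ', hΔ r hr]
  generalize Real.exp _ = e
  linear_combination (2 * lam * (R r * ζ r / (deriv R r * ζ r + R r * deriv ζ r)) * e) *
    isotropy_identity (R'' := deriv (deriv R) r) (ζ'' := deriv (deriv ζ) r) (hζ0 r hr) (hRζ0 r hr)

/-- Key lemma for the first general-diagonal solution-generating theorem: the displacement
`Δ(r) = λ (Rζ/(Rζ)')² exp(2 ∫ (ζ'/ζ)·(R'ζ − Rζ')/(R'ζ + Rζ'))` satisfies the homogeneous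
first-order linear ODE obtained from the pressure-isotropy condition. -/
theorem general_diagonal_one_lemma
    (a b : ℝ) (ζ R : ℝ → ℝ)
    (hζ : ContDiffOn ℝ 2 ζ (Set.Ioo a b))
    (hR : ContDiffOn ℝ 2 R (Set.Ioo a b))
    (hζ0 : ∀ r ∈ Set.Ioo a b, ζ r ≠ 0)
    (hR0 : ∀ r ∈ Set.Ioo a b, R r ≠ 0)
    (hRζ0 : ∀ r ∈ Set.Ioo a b, deriv R r * ζ r + R r * deriv ζ r ≠ 0)
    (r₀ : ℝ) (hr₀ : r₀ ∈ Set.Ioo a b) (lam : ℝ) (Δ : ℝ → ℝ)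
    (hΔ : ∀ r ∈ Set.Ioo a b,
      Δ r = lam * (R r * ζ r / (deriv R r * ζ r + R r * deriv ζ r)) ^ 2 *
        Real.exp (2 * ∫ s in r₀..r,
          (deriv ζ s / ζ s) *
            ((deriv R s * ζ s - R s * deriv ζ s) / (deriv R s * ζ s + R s * deriv ζ s)))) :
    ∀ r ∈ Set.Ioo a b,
      R r * (deriv R r * ζ r + R r * deriv ζ r) * deriv Δ r
        + 2 * (R r * deriv (deriv R) r * ζ r + (R r) ^ 2 * deriv (deriv ζ) r
            - R r * deriv R r * deriv ζ r - (deriv R r) ^ 2 * ζ r) * Δ r = 0 :=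
  general_diagonal_one_lemma_general a b ζ R hζ hR hζ0 hRζ0 r₀ hr₀ lam Δ hΔ
end

section
/- Let I ⊆ ℝ be an open interval, let ζ, B, R : ℝ → ℝ be twice continuously differentiable on I with ζ(r) ≠ 0, B(r) > 0 and R(r) ≠ 0 for all r ∈ I, and suppose (ζ, B, R) satisfies the second-order form of the general diagonal isotropy ODE on I. Fix r₀ ∈ I and σ, ε ∈ ℝ, and define Z : I → ℝ by Z(r) = σ + ε ∫_{r₀}^{r} R(s)/(√(B(s))·ζ(s)²) ds. Then (ζ·Z, B, R) also satisfies the second-order form of the general diagonal isotropy ODE on I. -/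
/-!
Reduction of order. If `ζ` solves `p y'' + q y' + c y = 0`, then `ζ Z` is another solution as soon
as the Wronskian `W = ζ² Z'` of `ζ` and `ζ Z` satisfies Abel's equation `p W' + q W = 0`; indeed
`(ζ Z)'' = ζ'' Z + W'/ζ` and `(ζ Z)' = ζ' Z + W/ζ`. For the isotropy equation
`p = 2 R² B` and `q = R² B' - 2 B R R'`, so `q / p = B'/(2B) - R'/R` and Abel's equation is solved by
`W = ε R / √B`, which is `ζ² Z'` for the given `Z`.
-/

open Set Filter Topology

theorem ContDiffOn.differentiableAt_deriv {F : ℝ → ℝ} {U : Set ℝ} {x : ℝ}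
    (hF : ContDiffOn ℝ 2 F U) (hU : IsOpen U) (hx : x ∈ U) :
    DifferentiableAt ℝ (deriv F) x :=
  ((hF.deriv_of_isOpen hU (by norm_num : (1 : WithTop ℕ∞) + 1 ≤ 2)).contDiffAt
    (hU.mem_nhds hx)).differentiableAt one_ne_zero

theorem ContinuousOn.hasDerivAt_integral_of_isOpen {f : ℝ → ℝ} {U : Set ℝ} {r₀ x : ℝ}
    (hf : ContinuousOn f U) (hU : IsOpen U) (hU' : U.OrdConnected) (hr₀ : r₀ ∈ U) (hx : x ∈ U) :
    HasDerivAt (fun y => ∫ s in r₀..y, f s) (f x) x :=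
  intervalIntegral.integral_hasDerivAt_right
    ((hf.mono (hU'.uIcc_subset hr₀ hx)).intervalIntegrable)
    (hf.stronglyMeasurableAtFilter hU x hx) (hf.continuousAt (hU.mem_nhds hx))

theorem reduction_of_order {ζ Z W : ℝ → ℝ} {p q c r W' : ℝ}
    (hL : p * deriv (deriv ζ) r + q * deriv ζ r + c * ζ r = 0)
    (hζ : ∀ᶠ x in 𝓝 r, HasDerivAt ζ (deriv ζ x) x)
    (hζ' : DifferentiableAt ℝ (deriv ζ) r)
    (hZ : ∀ᶠ x in 𝓝 r, HasDerivAt Z (W x / ζ x ^ 2) x)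
    (hW : HasDerivAt W W' r) (hζ0 : ζ r ≠ 0) (hAbel : p * W' + q * W r = 0) :
    p * deriv (deriv (fun x => ζ x * Z x)) r + q * deriv (fun x => ζ x * Z x) r
      + c * (ζ r * Z r) = 0 := by
  have hd1 : deriv (fun x => ζ x * Z x) =ᶠ[𝓝 r]
      fun x => deriv ζ x * Z x + ζ x * (W x / ζ x ^ 2) :=
    (hζ.and hZ).mono fun x h => (h.1.mul h.2).deriv
  have hd2 : HasDerivAt (fun x => deriv ζ x * Z x + ζ x * (W x / ζ x ^ 2))
      (deriv (deriv ζ) r * Z r + W' / ζ r) r := by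
    have hζr := hζ.self_of_nhds
    refine ((hζ'.hasDerivAt.mul hZ.self_of_nhds).add
      (hζr.mul (hW.fun_div (hζr.fun_pow 2) (pow_ne_zero 2 hζ0)))).congr_deriv ?_
    field_simp
    ring
  rw [hd1.deriv_eq, hd2.deriv, hd1.eq_of_nhds]
  field_simp
  linear_combination ζ r * Z r * hL + hAbel

theorem exists_hasDerivAt_mul_div_sqrt_abel {B R : ℝ → ℝ} {r B' R' : ℝ} (ε : ℝ)
    (hB : HasDerivAt B B' r) (hR : HasDerivAt R R' r) (hB0 : 0 < B r) :
    ∃ W', HasDerivAt (fun x => ε * (R x / √(B x))) W' r ∧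
      2 * R r ^ 2 * B r * W' + (R r ^ 2 * B' - 2 * B r * R r * R') * (ε * (R r / √(B r))) = 0 := by
  have hs : √(B r) ≠ 0 := (Real.sqrt_pos.mpr hB0).ne'
  refine ⟨_, ((hR.div (hB.sqrt hB0.ne') hs).const_mul ε), ?_⟩
  field_simp
  rw [Real.sq_sqrt hB0.le]
  ring

theorem general_diagonal_two_general
    (a b : ℝ) (ζ B R : ℝ → ℝ)
    (hζ : ContDiffOn ℝ 2 ζ (Set.Ioo a b))
    (hB : ContDiffOn ℝ 2 B (Set.Ioo a b))
    (hR : ContDiffOn ℝ 2 R (Set.Ioo a b))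
    (hζ0 : ∀ r ∈ Set.Ioo a b, ζ r ≠ 0)
    (hB0 : ∀ r ∈ Set.Ioo a b, 0 < B r)
    (hODE : ∀ r ∈ Set.Ioo a b,
      2 * (R r) ^ 2 * B r * deriv (deriv ζ) r
        + ((R r) ^ 2 * deriv B r - 2 * B r * R r * deriv R r) * deriv ζ r
        + (2 * B r * (R r * deriv (deriv R) r - (deriv R r) ^ 2)
            + R r * deriv B r * deriv R r + 2) * ζ r = 0)
    (r₀ : ℝ) (hr₀ : r₀ ∈ Set.Ioo a b) (σ ε : ℝ) (Z : ℝ → ℝ)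
    (hZ : ∀ r ∈ Set.Ioo a b,
      Z r = σ + ε * ∫ s in r₀..r, R s / (Real.sqrt (B s) * (ζ s) ^ 2)) :
    ∀ r ∈ Set.Ioo a b,
      2 * (R r) ^ 2 * B r * deriv (deriv (fun x => ζ x * Z x)) r
        + ((R r) ^ 2 * deriv B r - 2 * B r * R r * deriv R r) * deriv (fun x => ζ x * Z x) r
        + (2 * B r * (R r * deriv (deriv R) r - (deriv R r) ^ 2)
            + R r * deriv B r * deriv R r + 2) * (ζ r * Z r) = 0 := by
  have hU : IsOpen (Ioo a b) := isOpen_Ioo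
  have hdiff {F : ℝ → ℝ} (hF : ContDiffOn ℝ 2 F (Ioo a b)) {x : ℝ} (hx : x ∈ Ioo a b) :
      HasDerivAt F (deriv F x) x :=
    ((hF.contDiffAt (hU.mem_nhds hx)).differentiableAt two_ne_zero).hasDerivAt
  have hcont : ContinuousOn (fun s => R s / (√(B s) * ζ s ^ 2)) (Ioo a b) :=
    hR.continuousOn.div (hB.continuousOn.sqrt.mul (hζ.continuousOn.pow 2)) fun x hx =>
      mul_ne_zero (Real.sqrt_pos.mpr (hB0 x hx)).ne' (pow_ne_zero 2 (hζ0 x hx))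
  have hZ' : ∀ x ∈ Ioo a b, HasDerivAt Z (ε * (R x / √(B x)) / ζ x ^ 2) x := fun x hx => by
    rw [mul_div_assoc, div_div]
    exact (((hcont.hasDerivAt_integral_of_isOpen hU ordConnected_Ioo hr₀ hx).const_mul ε).const_add
      σ).congr_of_eventuallyEq (eventually_of_mem (hU.mem_nhds hx) hZ)
  intro r hr
  obtain ⟨W', hW, hAbel⟩ := exists_hasDerivAt_mul_div_sqrt_abel ε (hdiff hB hr) (hdiff hR hr) (hB0 r hr)
  exact reduction_of_order (hODE r hr) (eventually_of_mem (hU.mem_nhds hr) fun x hx => hdiff hζ hx)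
    (hζ.differentiableAt_deriv hU hr) (eventually_of_mem (hU.mem_nhds hr) hZ') hW (hζ0 r hr) hAbel

/-- **General diagonal 2.**  If `(ζ, B, R)` satisfies the second-order form of the general
diagonal pressure-isotropy ODE on an open interval, then so does `(ζ·Z, B, R)`, where
`Z(r) = σ + ε ∫ R/(√B ζ²)`. -/
theorem general_diagonal_two
    (a b : ℝ) (ζ B R : ℝ → ℝ)
    (hζ : ContDiffOn ℝ 2 ζ (Set.Ioo a b))
    (hB : ContDiffOn ℝ 2 B (Set.Ioo a b))
    (hR : ContDiffOn ℝ 2 R (Set.Ioo a b))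
    (hζ0 : ∀ r ∈ Set.Ioo a b, ζ r ≠ 0)
    (hB0 : ∀ r ∈ Set.Ioo a b, 0 < B r)
    (hR0 : ∀ r ∈ Set.Ioo a b, R r ≠ 0)
    (hODE : ∀ r ∈ Set.Ioo a b,
      2 * (R r) ^ 2 * B r * deriv (deriv ζ) r
        + ((R r) ^ 2 * deriv B r - 2 * B r * R r * deriv R r) * deriv ζ r
        + (2 * B r * (R r * deriv (deriv R) r - (deriv R r) ^ 2)
            + R r * deriv B r * deriv R r + 2) * ζ r = 0)
    (r₀ : ℝ) (hr₀ : r₀ ∈ Set.Ioo a b) (σ ε : ℝ) (Z : ℝ → ℝ)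
    (hZ : ∀ r ∈ Set.Ioo a b,
      Z r = σ + ε * ∫ s in r₀..r, R s / (Real.sqrt (B s) * (ζ s) ^ 2)) :
    ∀ r ∈ Set.Ioo a b,
      2 * (R r) ^ 2 * B r * deriv (deriv (fun x => ζ x * Z x)) r
        + ((R r) ^ 2 * deriv B r - 2 * B r * R r * deriv R r) * deriv (fun x => ζ x * Z x) r
        + (2 * B r * (R r * deriv (deriv R) r - (deriv R r) ^ 2)
            + R r * deriv B r * deriv R r + 2) * (ζ r * Z r) = 0 :=
  general_diagonal_two_general a b ζ B R hζ hB hR hζ0 hB0 hODE r₀ hr₀ σ ε Z hZ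
end

section
/- Let I ⊆ ℝ be an open interval, let ζ, B, R : ℝ → ℝ be continuously differentiable on I with ζ(r) ≠ 0, B(r) > 0, R(r) ≠ 0 for all r ∈ I, and with B continuously differentiable. Fix r₀ ∈ I and σ, ε ∈ ℝ, and define Z : I → ℝ by Z(r) = σ + ε ∫_{r₀}^{r} R(s)/(√(B(s))·ζ(s)²) ds. Then Z is twice differentiable on I and for all r ∈ I: 2R(r)²B(r)ζ(r)·Z''(r) + (R(r)²B'(r)ζ(r) + 4R(r)²B(r)ζ'(r) − 2B(r)R(r)R'(r)ζ(r))·Z'(r) = 0. -/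
/-!
Along the interval `Z' = ε g` with `g = R / (√B ζ²)`, by the fundamental theorem of calculus.
The equation is first order in `Z'`, and the coefficient of `Z'` is `-2R²Bζ` (the coefficient
of `Z''`) times the logarithmic derivative `g'/g = R'/R - B'/(2B) - 2ζ'/ζ`, so `ε g` solves it.
-/

open Set Filter Topology

theorem hasDerivAt_integral_of_continuousOn {s : Set ℝ} (hs : IsOpen s) [s.OrdConnected]
    {g : ℝ → ℝ} (hg : ContinuousOn g s) {r₀ x : ℝ} (hr₀ : r₀ ∈ s) (hx : x ∈ s) :
    HasDerivAt (fun u => ∫ t in r₀..u, g t) (g x) x :=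
  intervalIntegral.integral_hasDerivAt_right
    ((hg.mono (Set.OrdConnected.uIcc_subset ‹_› hr₀ hx)).intervalIntegrable)
    (hg.stronglyMeasurableAtFilter hs x hx) (hg.continuousAt (hs.mem_nhds hx))

theorem continuousOn_div_sqrt_mul_sq {s : Set ℝ} {R B ζ : ℝ → ℝ}
    (hR : ContinuousOn R s) (hB : ContinuousOn B s) (hζ : ContinuousOn ζ s)
    (hB0 : ∀ r ∈ s, 0 < B r) (hζ0 : ∀ r ∈ s, ζ r ≠ 0) :
    ContinuousOn (fun t => R t / (√(B t) * ζ t ^ 2)) s :=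
  hR.div (hB.sqrt.mul (hζ.pow 2)) fun r hr =>
    mul_ne_zero (Real.sqrt_ne_zero'.mpr (hB0 r hr)) (pow_ne_zero 2 (hζ0 r hr))

theorem hasDerivAt_div_sqrt_mul_sq {R B ζ : ℝ → ℝ} {R' B' ζ' r : ℝ}
    (hR : HasDerivAt R R' r) (hB : HasDerivAt B B' r) (hζ : HasDerivAt ζ ζ' r)
    (hB0 : 0 < B r) (hζ0 : ζ r ≠ 0) :
    HasDerivAt (fun t => R t / (√(B t) * ζ t ^ 2))
      ((2 * B r * R' * ζ r - R r * B' * ζ r - 4 * R r * B r * ζ') /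
        (2 * B r * √(B r) * ζ r ^ 3)) r := by
  have hsqrt : √(B r) ≠ 0 := Real.sqrt_ne_zero'.mpr hB0
  refine (hR.div (((Real.hasDerivAt_sqrt hB0.ne').comp r hB).mul (hζ.pow 2))
    (mul_ne_zero hsqrt (pow_ne_zero 2 hζ0))).congr_deriv ?_
  simp only [Pi.mul_apply, Pi.pow_apply, Function.comp_apply]
  field_simp
  linear_combination ζ r ^ 2 * R r * B' * Real.sq_sqrt hB0.le

theorem div_sqrt_mul_sq_solves_reduced_equation {R R' B B' ζ ζ' : ℝ} (hB : 0 < B) (hζ : ζ ≠ 0) :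
    2 * R ^ 2 * B * ζ *
        ((2 * B * R' * ζ - R * B' * ζ - 4 * R * B * ζ') / (2 * B * √B * ζ ^ 3))
      + (R ^ 2 * B' * ζ + 4 * R ^ 2 * B * ζ' - 2 * B * R * R' * ζ) * (R / (√B * ζ ^ 2))
      = 0 := by
  have hsqrt : √B ≠ 0 := Real.sqrt_ne_zero'.mpr hB
  field_simp
  ring

theorem reduction_of_order_s3 {Z g : ℝ → ℝ} {s : Set ℝ} (hs : IsOpen s) {r g' P Q ε : ℝ}
    (hZ : ∀ x ∈ s, HasDerivAt Z (ε * g x) x) (hr : r ∈ s) (hg : HasDerivAt g g' r)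
    (hPQ : P * g' + Q * g r = 0) :
    (DifferentiableAt ℝ Z r ∧ DifferentiableAt ℝ (deriv Z) r) ∧
      P * deriv (deriv Z) r + Q * deriv Z r = 0 := by
  have hZ' : deriv Z =ᶠ[𝓝 r] fun x => ε * g x :=
    eventually_of_mem (hs.mem_nhds hr) fun x hx => (hZ x hx).deriv
  have hZ'' : HasDerivAt (deriv Z) (ε * g') r := (hg.const_mul ε).congr_of_eventuallyEq hZ'
  refine ⟨⟨(hZ r hr).differentiableAt, hZ''.differentiableAt⟩, ?_⟩
  rw [hZ''.deriv, hZ'.eq_of_nhds]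
  linear_combination ε * hPQ

theorem general_diagonal_two_lemma_general
    (a b : ℝ) (ζ B R : ℝ → ℝ)
    (hζ : ContDiffOn ℝ 1 ζ (Set.Ioo a b))
    (hB : ContDiffOn ℝ 1 B (Set.Ioo a b))
    (hR : ContDiffOn ℝ 1 R (Set.Ioo a b))
    (hζ0 : ∀ r ∈ Set.Ioo a b, ζ r ≠ 0)
    (hB0 : ∀ r ∈ Set.Ioo a b, 0 < B r)
    (r₀ : ℝ) (hr₀ : r₀ ∈ Set.Ioo a b) (σ ε : ℝ) (Z : ℝ → ℝ)
    (hZ : ∀ r ∈ Set.Ioo a b,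
      Z r = σ + ε * ∫ s in r₀..r, R s / (Real.sqrt (B s) * (ζ s) ^ 2)) :
    ∀ r ∈ Set.Ioo a b,
      (DifferentiableAt ℝ Z r ∧ DifferentiableAt ℝ (deriv Z) r) ∧
      2 * (R r) ^ 2 * B r * ζ r * deriv (deriv Z) r
        + ((R r) ^ 2 * deriv B r * ζ r + 4 * (R r) ^ 2 * B r * deriv ζ r
            - 2 * B r * R r * deriv R r * ζ r) * deriv Z r = 0 := by
  have hg := continuousOn_div_sqrt_mul_sq hR.continuousOn hB.continuousOn hζ.continuousOn
    hB0 hζ0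
  have hZ' : ∀ x ∈ Ioo a b, HasDerivAt Z (ε * (R x / (√(B x) * ζ x ^ 2))) x := fun x hx =>
    (((hasDerivAt_integral_of_continuousOn isOpen_Ioo hg hr₀ hx).const_mul ε).const_add
      σ).congr_of_eventuallyEq (eventually_of_mem (isOpen_Ioo.mem_nhds hx) hZ)
  intro r hr
  have hderiv {f : ℝ → ℝ} (hf : ContDiffOn ℝ 1 f (Ioo a b)) : HasDerivAt f (deriv f r) r :=
    ((hf.differentiableOn one_ne_zero).differentiableAt (isOpen_Ioo.mem_nhds hr)).hasDerivAt
  exact reduction_of_order_s3 isOpen_Ioo hZ' hr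
    (hasDerivAt_div_sqrt_mul_sq (hderiv hR) (hderiv hB) (hderiv hζ) (hB0 r hr) (hζ0 r hr))
    (div_sqrt_mul_sq_solves_reduced_equation (hB0 r hr) (hζ0 r hr))

/-- Reduction-of-order lemma behind **General diagonal 2**: the factor
`Z(r) = σ + ε ∫ R/(√B ζ²)` is twice differentiable and satisfies
`2R²Bζ Z'' + (R²B'ζ + 4R²Bζ' − 2BRR'ζ) Z' = 0`. -/
theorem general_diagonal_two_lemma
    (a b : ℝ) (ζ B R : ℝ → ℝ)
    (hζ : ContDiffOn ℝ 1 ζ (Set.Ioo a b))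
    (hB : ContDiffOn ℝ 1 B (Set.Ioo a b))
    (hR : ContDiffOn ℝ 1 R (Set.Ioo a b))
    (hζ0 : ∀ r ∈ Set.Ioo a b, ζ r ≠ 0)
    (hB0 : ∀ r ∈ Set.Ioo a b, 0 < B r)
    (hR0 : ∀ r ∈ Set.Ioo a b, R r ≠ 0)
    (r₀ : ℝ) (hr₀ : r₀ ∈ Set.Ioo a b) (σ ε : ℝ) (Z : ℝ → ℝ)
    (hZ : ∀ r ∈ Set.Ioo a b,
      Z r = σ + ε * ∫ s in r₀..r, R s / (Real.sqrt (B s) * (ζ s) ^ 2)) :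
    ∀ r ∈ Set.Ioo a b,
      (DifferentiableAt ℝ Z r ∧ DifferentiableAt ℝ (deriv Z) r) ∧
      2 * (R r) ^ 2 * B r * ζ r * deriv (deriv Z) r
        + ((R r) ^ 2 * deriv B r * ζ r + 4 * (R r) ^ 2 * B r * deriv ζ r
            - 2 * B r * R r * deriv R r * ζ r) * deriv Z r = 0 :=
  general_diagonal_two_lemma_general a b ζ B R hζ hB hR hζ0 hB0 r₀ hr₀ σ ε Z hZ
end

section
/- Let I ⊆ ℝ be an open interval, let ζ, R : ℝ → ℝ be twice continuously differentiable on I with ζ(r) ≠ 0 and R(r) ≠ 0 for all r ∈ I, and suppose the Gaussian polar isotropy ODE holds on I: ζ''(r) − ζ'(r)·R'(r)/R(r) + ζ(r)·(1 − R'(r)² + R''(r)R(r))/R(r)² = 0. Fix r₀ ∈ I and σ, ε ∈ ℝ, and define Λ : I → ℝ by Λ(r) = σ + ε ∫_{r₀}^{r} R(s)/ζ(s)² ds. Then (ζ·Λ, R) also satisfies the Gaussian polar isotropy ODE on I. -/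
open Set MeasureTheory

/-- **Gaussian polar.**  If `(ζ, R)` satisfies the Gaussian polar isotropy ODE
`ζ'' − ζ'R'/R + ζ(1 − (R')² + R''R)/R² = 0` on an open interval, then so does `(ζ·Λ, R)`,
where `Λ(r) = σ + ε ∫ R/ζ²`. -/
theorem gaussian_polar
    (a b : ℝ) (ζ R : ℝ → ℝ)
    (hζ : ContDiffOn ℝ 2 ζ (Set.Ioo a b))
    (hR : ContDiffOn ℝ 2 R (Set.Ioo a b))
    (hζ0 : ∀ r ∈ Set.Ioo a b, ζ r ≠ 0)
    (hR0 : ∀ r ∈ Set.Ioo a b, R r ≠ 0)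
    (hODE : ∀ r ∈ Set.Ioo a b,
      deriv (deriv ζ) r - deriv ζ r * (deriv R r / R r)
        + ζ r * ((1 - (deriv R r) ^ 2 + deriv (deriv R) r * R r) / (R r) ^ 2) = 0)
    (r₀ : ℝ) (hr₀ : r₀ ∈ Set.Ioo a b) (σ ε : ℝ) (Λ : ℝ → ℝ)
    (hΛ : ∀ r ∈ Set.Ioo a b, Λ r = σ + ε * ∫ s in r₀..r, R s / (ζ s) ^ 2) :
    ∀ r ∈ Set.Ioo a b,
      deriv (deriv (fun x => ζ x * Λ x)) r
        - deriv (fun x => ζ x * Λ x) r * (deriv R r / R r)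
        + (ζ r * Λ r) * ((1 - (deriv R r) ^ 2 + deriv (deriv R) r * R r) / (R r) ^ 2)
        = 0 := by
  intro r hr
  set s : Set ℝ := Set.Ioo a b with hs_def
  have hsO : IsOpen s := isOpen_Ioo
  set g : ℝ → ℝ := fun x => R x / ζ x ^ 2 with hg_def
  have hζc : ContinuousOn ζ s := hζ.continuousOn
  have hRc : ContinuousOn R s := hR.continuousOn
  have hgc : ContinuousOn g s :=
    hRc.div (hζc.pow 2) (fun x hx => pow_ne_zero 2 (hζ0 x hx))
  -- derivative of Λ
  have hΛd : ∀ x ∈ s, HasDerivAt Λ (ε * g x) x := by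
    intro x hx
    have hsub : Set.uIcc r₀ x ⊆ s := Set.ordConnected_Ioo.uIcc_subset hr₀ hx
    have hint : IntervalIntegrable g volume r₀ x :=
      (hgc.mono hsub).intervalIntegrable
    have hmeas : StronglyMeasurableAtFilter g (nhds x) volume :=
      hgc.stronglyMeasurableAtFilter hsO x hx
    have hca : ContinuousAt g x := hgc.continuousAt (hsO.mem_nhds hx)
    have hF : HasDerivAt (fun u => ∫ t in r₀..u, g t) (g x) x :=
      intervalIntegral.integral_hasDerivAt_right hint hmeas hca
    have h2 : HasDerivAt (fun u => σ + ε * ∫ t in r₀..u, g t) (ε * g x) x := by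
      simpa using (hF.const_mul ε).const_add σ
    refine h2.congr_of_eventuallyEq ?_
    filter_upwards [hsO.mem_nhds hx] with y hy
    exact hΛ y hy
  -- derivatives of ζ and R
  have hζd : ∀ x ∈ s, HasDerivAt ζ (deriv ζ x) x := fun x hx =>
    ((hζ.differentiableOn (by norm_num)).differentiableAt (hsO.mem_nhds hx)).hasDerivAt
  have hRd : ∀ x ∈ s, HasDerivAt R (deriv R x) x := fun x hx =>
    ((hR.differentiableOn (by norm_num)).differentiableAt (hsO.mem_nhds hx)).hasDerivAt
  have hζ' : ContDiffOn ℝ 1 (deriv ζ) s := hζ.deriv_of_isOpen hsO (by norm_num)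
  have hζ'' : HasDerivAt (deriv ζ) (deriv (deriv ζ) r) r :=
    ((hζ'.differentiableOn (by norm_num)).differentiableAt (hsO.mem_nhds hr)).hasDerivAt
  -- first derivative of ζ·Λ on s
  have hP : ∀ x ∈ s, HasDerivAt (fun y => ζ y * Λ y)
      (deriv ζ x * Λ x + ζ x * (ε * g x)) x := fun x hx =>
    (hζd x hx).mul (hΛd x hx)
  have hderiv1 : deriv (fun y => ζ y * Λ y) r = deriv ζ r * Λ r + ζ r * (ε * g r) :=
    (hP r hr).deriv
  -- second derivative
  have hev : deriv (fun y => ζ y * Λ y)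
      =ᶠ[nhds r] fun x => deriv ζ x * Λ x + ζ x * (ε * g x) := by
    filter_upwards [hsO.mem_nhds hr] with x hx
    exact (hP x hx).deriv
  have hgd : HasDerivAt g
      ((deriv R r * ζ r ^ 2 - R r * (2 * ζ r ^ 1 * deriv ζ r)) / (ζ r ^ 2) ^ 2) r :=
    (hRd r hr).div ((hζd r hr).pow 2) (pow_ne_zero 2 (hζ0 r hr))
  have hP2 : HasDerivAt (fun x => deriv ζ x * Λ x + ζ x * (ε * g x))
      ((deriv (deriv ζ) r * Λ r + deriv ζ r * (ε * g r))
        + (deriv ζ r * (ε * g r) + ζ r * (ε * ((deriv R r * ζ r ^ 2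
            - R r * (2 * ζ r ^ 1 * deriv ζ r)) / (ζ r ^ 2) ^ 2)))) r :=
    (hζ''.mul (hΛd r hr)).add ((hζd r hr).mul (hgd.const_mul ε))
  have hderiv2 : deriv (deriv (fun y => ζ y * Λ y)) r
      = (deriv (deriv ζ) r * Λ r + deriv ζ r * (ε * g r))
        + (deriv ζ r * (ε * g r) + ζ r * (ε * ((deriv R r * ζ r ^ 2
            - R r * (2 * ζ r ^ 1 * deriv ζ r)) / (ζ r ^ 2) ^ 2))) := by
    rw [hev.deriv_eq]
    exact hP2.deriv
  have hode := hODE r hr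
  have hζr := hζ0 r hr
  have hRr := hR0 r hr
  have hzz : deriv (deriv ζ) r = deriv ζ r * (deriv R r / R r)
      - ζ r * ((1 - deriv R r ^ 2 + deriv (deriv R) r * R r) / R r ^ 2) := by
    linarith [hode]
  rw [hderiv1, hderiv2, hg_def, hzz]
  field_simp
  ring
end

section
/- Let I ⊆ ℝ be an open interval, let ζ, R : ℝ → ℝ be twice continuously differentiable on I with ζ(r) ≠ 0 and R(r) ≠ 0 for all r ∈ I, and suppose the Synge isothermal isotropy ODE holds on I: ζ''(r) − ζ'(r)·R'(r)/R(r) − ζ(r)·(1 − R'(r)² + R(r)R''(r))/(2R(r)²) = 0. Fix r₀ ∈ I and σ, ε ∈ ℝ, and define A : I → ℝ by A(r) = σ + ε ∫_{r₀}^{r} R(s)/ζ(s)² ds. Then (ζ·A, R) also satisfies the Synge isothermal isotropy ODE on I. -/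
/-!
Write `L u = u'' − u'R'/R − u·(1 − R'² + RR'')/(2R²)` (`isotropyDefect R u`). Leibniz' rule gives
`L (ζA) = A · L ζ + 2ζ'A' + ζA'' − ζA'R'/R = A · L ζ + (R/ζ) · (ζ²A'/R)'`,
and `ζ²A'/R = ε` is constant precisely because `A' = εR/ζ²`. Hence `L (ζA) = A · L ζ = 0`.
-/

open Filter Topology

theorem ContinuousOn.integral_hasDerivAt_right {E : Type*} [NormedAddCommGroup E]
    [NormedSpace ℝ E] [CompleteSpace E] {f : ℝ → E} {s : Set ℝ} {a x : ℝ}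
    (hf : ContinuousOn f s) (hs : IsOpen s) (hconn : s.OrdConnected) (ha : a ∈ s) (hx : x ∈ s) :
    HasDerivAt (fun y => ∫ t in a..y, f t) (f x) x :=
  intervalIntegral.integral_hasDerivAt_right
    ((hf.mono (hconn.uIcc_subset ha hx)).intervalIntegrable)
    (hf.stronglyMeasurableAtFilter hs x hx) (hf.continuousAt (hs.mem_nhds hx))

theorem deriv_deriv_mul {𝕜 : Type*} [NontriviallyNormedField 𝕜] {f g : 𝕜 → 𝕜} {x : 𝕜}
    (hf : ∀ᶠ y in 𝓝 x, DifferentiableAt 𝕜 f y) (hg : ∀ᶠ y in 𝓝 x, DifferentiableAt 𝕜 g y)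
    (hf' : DifferentiableAt 𝕜 (deriv f) x) (hg' : DifferentiableAt 𝕜 (deriv g) x) :
    deriv (deriv fun y => f y * g y) x
      = deriv (deriv f) x * g x + 2 * (deriv f x * deriv g x) + f x * deriv (deriv g) x := by
  have hfg : deriv (fun y => f y * g y) =ᶠ[𝓝 x] fun y => deriv f y * g y + f y * deriv g y :=
    (hf.and hg).mono fun y hy => deriv_fun_mul hy.1 hy.2
  rw [hfg.deriv_eq, ((hf'.hasDerivAt.fun_mul hg.self_of_nhds.hasDerivAt).fun_add
    (hf.self_of_nhds.hasDerivAt.fun_mul hg'.hasDerivAt)).deriv]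
  ring

noncomputable def isotropyDefect (R u : ℝ → ℝ) (r : ℝ) : ℝ :=
  deriv (deriv u) r - deriv u r * (deriv R r / R r)
    - u r * ((1 - (deriv R r) ^ 2 + R r * deriv (deriv R) r) / (2 * (R r) ^ 2))

theorem isotropyDefect_mul_of_hasDerivAt {ζ A R : ℝ → ℝ} {r ε : ℝ}
    (hζ : ContDiffAt ℝ 2 ζ r) (hR : DifferentiableAt ℝ R r) (hζr : ζ r ≠ 0) (hRr : R r ≠ 0)
    (hA : ∀ᶠ x in 𝓝 r, HasDerivAt A (ε * (R x / ζ x ^ 2)) x) :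
    isotropyDefect R (fun x => ζ x * A x) r = A r * isotropyDefect R ζ r := by
  have hζ_diff : ∀ᶠ x in 𝓝 r, DifferentiableAt ℝ ζ x :=
    (hζ.eventually (by simp)).mono fun x hx => hx.differentiableAt (by simp)
  have hζ'_diff : DifferentiableAt ℝ (deriv ζ) r :=
    (hζ.derivWithin (m := 1) (by norm_num)).differentiableAt (by simp)
  have hA' : deriv A =ᶠ[𝓝 r] fun x => ε * (R x / ζ x ^ 2) := hA.mono fun x hx => hx.deriv
  have hA'' : HasDerivAt (deriv A)
      (ε * ((deriv R r * ζ r ^ 2 - R r * (2 * ζ r ^ 1 * deriv ζ r)) / (ζ r ^ 2) ^ 2)) r :=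
    ((hR.hasDerivAt.div (hζ_diff.self_of_nhds.hasDerivAt.pow 2)
      (pow_ne_zero 2 hζr)).const_mul ε).congr_of_eventuallyEq hA'
  rw [isotropyDefect, isotropyDefect,
    deriv_deriv_mul hζ_diff (hA.mono fun x hx => hx.differentiableAt) hζ'_diff
      hA''.differentiableAt,
    deriv_fun_mul hζ_diff.self_of_nhds hA.self_of_nhds.differentiableAt, hA''.deriv,
    hA'.eq_of_nhds]
  field_simp
  ring

/-- **Synge.**  If `(ζ, R)` satisfies the Synge isothermal isotropy ODE
`ζ'' − ζ'R'/R − ζ(1 − (R')² + RR'')/(2R²) = 0` on an open interval, then so does `(ζ·A, R)`,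
where `A(r) = σ + ε ∫ R/ζ²`. -/
theorem synge_isothermal
    (a b : ℝ) (ζ R : ℝ → ℝ)
    (hζ : ContDiffOn ℝ 2 ζ (Set.Ioo a b))
    (hR : ContDiffOn ℝ 2 R (Set.Ioo a b))
    (hζ0 : ∀ r ∈ Set.Ioo a b, ζ r ≠ 0)
    (hR0 : ∀ r ∈ Set.Ioo a b, R r ≠ 0)
    (hODE : ∀ r ∈ Set.Ioo a b,
      deriv (deriv ζ) r - deriv ζ r * (deriv R r / R r)
        - ζ r * ((1 - (deriv R r) ^ 2 + R r * deriv (deriv R) r) / (2 * (R r) ^ 2)) = 0)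
    (r₀ : ℝ) (hr₀ : r₀ ∈ Set.Ioo a b) (σ ε : ℝ) (A : ℝ → ℝ)
    (hA : ∀ r ∈ Set.Ioo a b, A r = σ + ε * ∫ s in r₀..r, R s / (ζ s) ^ 2) :
    ∀ r ∈ Set.Ioo a b,
      deriv (deriv (fun x => ζ x * A x)) r
        - deriv (fun x => ζ x * A x) r * (deriv R r / R r)
        - (ζ r * A r) * ((1 - (deriv R r) ^ 2 + R r * deriv (deriv R) r) / (2 * (R r) ^ 2))
        = 0 := by
  have hI : IsOpen (Set.Ioo a b) := isOpen_Ioo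
  have hA_deriv : ∀ x ∈ Set.Ioo a b, HasDerivAt A (ε * (R x / ζ x ^ 2)) x := fun x hx =>
    ((((hR.continuousOn.div (hζ.continuousOn.pow 2) fun y hy => pow_ne_zero 2 (hζ0 y hy)
      ).integral_hasDerivAt_right hI Set.ordConnected_Ioo hr₀ hx).const_mul ε).const_add σ
      ).congr_of_eventuallyEq (eventually_of_mem (hI.mem_nhds hx) hA)
  intro r hr
  change isotropyDefect R (fun x => ζ x * A x) r = 0
  rw [isotropyDefect_mul_of_hasDerivAt (hζ.contDiffAt (hI.mem_nhds hr))
    ((hR.differentiableOn (by norm_num)).differentiableAt (hI.mem_nhds hr)) (hζ0 r hr) (hR0 r hr)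
    (eventually_of_mem (hI.mem_nhds hr) hA_deriv), isotropyDefect, hODE r hr, mul_zero]
end

section
/- Let ζ, B, R : ℝ → ℝ be four times continuously differentiable on a neighborhood of 0, with R(0) = 0, R'(0) ≠ 0, ζ(0) > 0, ζ'(0) = 0, B(0) = 1/R'(0)², B'(0) = −2R''(0)/R'(0)³, and R(r) ≠ 0, ζ(r) ≠ 0 for all sufficiently small r > 0. Then lim_{r→0⁺} [ −(1 − B(r)R'(r)²)/R(r)² + 2B(r)ζ'(r)R'(r)/(R(r)ζ(r)) ] = B''(0)/2 + 2ζ''(0)/(ζ(0)R'(0)²) + R'''(0)/R'(0)³ − 3R''(0)²/R'(0)⁴. -/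
/-!
Put `f = B R'² − 1`. The hypotheses on `B(0)` and `B'(0)` say exactly that `f(0) = f'(0) = 0`, so
`f(r)/r² → f''(0)/2` by l'Hôpital. Since `R(r)/r → R'(0)` and, because `ζ'(0) = 0`, `ζ'(r)/r → ζ''(0)`,
writing `G_{r̂r̂} = (f/r²)(r/R)² + 2B (ζ'/r)(r/R) R'/ζ` makes every factor converge.
-/

open Filter Topology

lemma HasDerivAt.tendsto_div_self {g : ℝ → ℝ} {a : ℝ} (hg : HasDerivAt g a 0) (h0 : g 0 = 0) :
    Tendsto (fun r => g r / r) (𝓝[≠] 0) (𝓝 a) := by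
  simpa [h0, div_eq_inv_mul] using hasDerivAt_iff_tendsto_slope_zero.1 hg

lemma tendsto_div_sq_of_hasDerivAt {f f' : ℝ → ℝ} {a : ℝ}
    (hf : ∀ᶠ x in 𝓝 0, HasDerivAt f (f' x) x) (hf' : HasDerivAt f' a 0)
    (h0 : f 0 = 0) (h1 : f' 0 = 0) :
    Tendsto (fun r => f r / r ^ 2) (𝓝[≠] 0) (𝓝 (a / 2)) := by
  have hcont : Tendsto f (𝓝[≠] 0) (𝓝 0) := by
    simpa [h0] using hf.self_of_nhds.continuousAt.tendsto.mono_left nhdsWithin_le_nhds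
  refine HasDerivAt.lhopital_zero_nhdsNE (f' := f') (g' := fun x => 2 * x)
    (eventually_nhdsWithin_of_eventually_nhds hf)
    (Eventually.of_forall fun x => by simpa using hasDerivAt_pow 2 x)
    (eventually_mem_nhdsWithin.mono fun x hx => mul_ne_zero two_ne_zero hx) hcont ?_ ?_
  · simpa using ((continuous_pow 2).tendsto (0 : ℝ)).mono_left nhdsWithin_le_nhds
  · refine ((hf'.tendsto_div_self h1).div_const 2).congr fun x => ?_
    rw [div_div, mul_comm]

lemma HasDerivAt.mul_sq {u v : ℝ → ℝ} {u' v' x : ℝ} (hu : HasDerivAt u u' x)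
    (hv : HasDerivAt v v' x) :
    HasDerivAt (fun r => u r * v r ^ 2) (u' * v x ^ 2 + 2 * u x * v x * v') x :=
  (hu.fun_mul (hv.fun_pow 2)).congr_deriv (by norm_num; ring)

lemma tendsto_mul_sq_sub_one_div_sq {u v : ℝ → ℝ} (hu : ContDiffAt ℝ 2 u 0)
    (hv : ContDiffAt ℝ 2 v 0) (h0 : u 0 * v 0 ^ 2 = 1)
    (h1 : deriv u 0 * v 0 ^ 2 + 2 * u 0 * v 0 * deriv v 0 = 0) :
    Tendsto (fun r => (u r * v r ^ 2 - 1) / r ^ 2) (𝓝[≠] 0)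
      (𝓝 ((deriv (deriv u) 0 * v 0 ^ 2 + 4 * deriv u 0 * v 0 * deriv v 0
        + 2 * u 0 * (deriv v 0 ^ 2 + v 0 * deriv (deriv v) 0)) / 2)) := by
  have hdiff : ∀ {w : ℝ → ℝ}, ContDiffAt ℝ 2 w 0 → ∀ᶠ x in 𝓝 0, DifferentiableAt ℝ w x :=
    fun hw => (hw.eventually (by simp)).mono fun x hx => hx.differentiableAt (by norm_num)
  have hdiff' : ∀ {w : ℝ → ℝ}, ContDiffAt ℝ 2 w 0 → DifferentiableAt ℝ (deriv w) 0 :=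
    fun hw => (hw.derivWithin (m := 1) (by norm_num)).differentiableAt one_ne_zero
  refine tendsto_div_sq_of_hasDerivAt
    (f' := fun x => deriv u x * v x ^ 2 + 2 * u x * v x * deriv v x) ?_ ?_ (by simp [h0]) h1
  · filter_upwards [hdiff hu, hdiff hv] with x hux hvx
    exact (hux.hasDerivAt.mul_sq hvx.hasDerivAt).sub_const 1
  · have hu0 := (hdiff hu).self_of_nhds.hasDerivAt
    have hv0 := (hdiff hv).self_of_nhds.hasDerivAt
    exact (((hdiff' hu).hasDerivAt.mul_sq hv0).fun_add
      (((hu0.const_mul 2).fun_mul hv0).fun_mul (hdiff' hv).hasDerivAt)).congr_deriv (by ring)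

lemma tendsto_radial_einstein {ζ ζ' B R R' : ℝ → ℝ} {m z : ℝ}
    (hm : Tendsto (fun r => (B r * R' r ^ 2 - 1) / r ^ 2) (𝓝[≠] 0) (𝓝 m))
    (hR : Tendsto (fun r => R r / r) (𝓝[≠] 0) (𝓝 (R' 0))) (hR0 : R' 0 ≠ 0)
    (hζ' : Tendsto (fun r => ζ' r / r) (𝓝[≠] 0) (𝓝 z))
    (hB : ContinuousAt B 0) (hR' : ContinuousAt R' 0) (hζ : ContinuousAt ζ 0) (hζ0 : ζ 0 ≠ 0) :
    Tendsto (fun r => -((1 - B r * R' r ^ 2) / R r ^ 2) + 2 * B r * ζ' r * R' r / (R r * ζ r))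
      (𝓝[≠] 0) (𝓝 (m / R' 0 ^ 2 + 2 * B 0 * z / ζ 0)) := by
  have tB := hB.tendsto.mono_left (nhdsWithin_le_nhds (s := {0}ᶜ))
  have tR' := hR'.tendsto.mono_left (nhdsWithin_le_nhds (s := {0}ᶜ))
  have tζ := hζ.tendsto.mono_left (nhdsWithin_le_nhds (s := {0}ᶜ))
  have hlim := (hm.div (hR.pow 2) (pow_ne_zero 2 hR0)).add
    ((((tB.const_mul 2).mul (hζ'.div hR hR0)).mul tR').div tζ hζ0)
  convert hlim.congr' ?_ using 2
  · field_simp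
  · filter_upwards [self_mem_nhdsWithin, hR.eventually_ne hR0, tζ.eventually_ne hζ0]
      with r (hr : r ≠ 0) hRr hζr
    have hRr : R r ≠ 0 := (div_ne_zero_iff.1 hRr).1
    simp only [Pi.div_apply]
    field_simp
    ring

theorem centre_Grr_general_diagonal_general
    (ζ B R : ℝ → ℝ) (δ : ℝ) (hδ : 0 < δ)
    (hζ : ContDiffOn ℝ 4 ζ (Set.Ioo (-δ) δ))
    (hB : ContDiffOn ℝ 4 B (Set.Ioo (-δ) δ))
    (hR : ContDiffOn ℝ 4 R (Set.Ioo (-δ) δ))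
    (hR0 : R 0 = 0)
    (hR1 : deriv R 0 ≠ 0)
    (hζ0 : 0 < ζ 0)
    (hζ1 : deriv ζ 0 = 0)
    (hB0 : B 0 = 1 / (deriv R 0) ^ 2)
    (hB1 : deriv B 0 = -2 * deriv (deriv R) 0 / (deriv R 0) ^ 3) :
    Tendsto
      (fun r => -((1 - B r * (deriv R r) ^ 2) / (R r) ^ 2)
        + 2 * B r * deriv ζ r * deriv R r / (R r * ζ r))
      (𝓝[>] (0 : ℝ))
      (𝓝 (deriv (deriv B) 0 / 2
        + 2 * deriv (deriv ζ) 0 / (ζ 0 * (deriv R 0) ^ 2)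
        + deriv (deriv (deriv R)) 0 / (deriv R 0) ^ 3
        - 3 * (deriv (deriv R) 0) ^ 2 / (deriv R 0) ^ 4)) := by
  have hU : Set.Ioo (-δ) δ ∈ 𝓝 (0 : ℝ) := Ioo_mem_nhds (neg_neg_of_pos hδ) hδ
  have hζ2 : ContDiffAt ℝ 2 ζ 0 := (hζ.contDiffAt hU).of_le (by norm_num)
  have hB2 : ContDiffAt ℝ 2 B 0 := (hB.contDiffAt hU).of_le (by norm_num)
  have hR' : ContDiffAt ℝ 2 (deriv R) 0 := (hR.contDiffAt hU).derivWithin (by norm_num)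
  have hf := tendsto_mul_sq_sub_one_div_sq hB2 hR' (by rw [hB0]; field_simp)
    (by rw [hB0, hB1]; field_simp; ring)
  have hRslope :=
    ((hR.contDiffAt hU).differentiableAt (by norm_num)).hasDerivAt.tendsto_div_self hR0
  have hζslope := ((hζ2.derivWithin (m := 1) (by norm_num)).differentiableAt one_ne_zero
    ).hasDerivAt.tendsto_div_self hζ1
  have hlim := tendsto_radial_einstein hf hRslope hR1 hζslope hB2.continuousAt
    hR'.continuousAt hζ2.continuousAt hζ0.ne'
  convert hlim.mono_left (nhdsGT_le_nhdsNE 0) using 2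
  rw [hB0, hB1]
  field_simp
  ring

/-- Central value of `G_{r̂r̂}` in general diagonal coordinates: under the regularity
conditions at the centre,
`G_{r̂r̂} → B''(0)/2 + 2ζ''(0)/(ζ(0)R'(0)²) + R'''(0)/R'(0)³ − 3R''(0)²/R'(0)⁴`. -/
theorem centre_Grr_general_diagonal
    (ζ B R : ℝ → ℝ) (δ : ℝ) (hδ : 0 < δ)
    (hζ : ContDiffOn ℝ 4 ζ (Set.Ioo (-δ) δ))
    (hB : ContDiffOn ℝ 4 B (Set.Ioo (-δ) δ))
    (hR : ContDiffOn ℝ 4 R (Set.Ioo (-δ) δ))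
    (hR0 : R 0 = 0)
    (hR1 : deriv R 0 ≠ 0)
    (hζ0 : 0 < ζ 0)
    (hζ1 : deriv ζ 0 = 0)
    (hB0 : B 0 = 1 / (deriv R 0) ^ 2)
    (hB1 : deriv B 0 = -2 * deriv (deriv R) 0 / (deriv R 0) ^ 3)
    (hRne : ∀ᶠ r in 𝓝[>] (0 : ℝ), R r ≠ 0)
    (hζne : ∀ᶠ r in 𝓝[>] (0 : ℝ), ζ r ≠ 0) :
    Tendsto
      (fun r => -((1 - B r * (deriv R r) ^ 2) / (R r) ^ 2)
        + 2 * B r * deriv ζ r * deriv R r / (R r * ζ r))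
      (𝓝[>] (0 : ℝ))
      (𝓝 (deriv (deriv B) 0 / 2
        + 2 * deriv (deriv ζ) 0 / (ζ 0 * (deriv R 0) ^ 2)
        + deriv (deriv (deriv R)) 0 / (deriv R 0) ^ 3
        - 3 * (deriv (deriv R) 0) ^ 2 / (deriv R 0) ^ 4)) :=
  centre_Grr_general_diagonal_general ζ B R δ hδ hζ hB hR hR0 hR1 hζ0 hζ1 hB0 hB1
end
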